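/- Let 0 < ε < 1 and suppose h > (2π·C₃/3)·σ, so that G³(h) > 0 and hence 0 < k_r − h³·ρ³(k_r,h). If 1/(4π·σ) > (D/k_r)·ε/(1−ε), then k_r − h³·ρ³(k_r,h) < ε·k_r if and only if h < F₃ := (C₃/6)·(1/(4π·σ) − (D/k_r)·ε/(1−ε))⁻¹. If instead 1/(4π·σ) ≤ (D/k_r)·ε/(1−ε), then k_r − h³·ρ³(k_r,h) < ε·k_r holds for every h > (2π·C₃/3)·σ. -/
import Mathlib


/-- The constant `C₃ ≈ 1.5164` from the 3D mesoscopic rate expression. -/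
noncomputable def C3 : ℝ := 1.5164

/-- `G³(h) = 1/(4π·σ) − C₃/(6h)`. -/
noncomputable def G3 (σ h : ℝ) : ℝ := 1 / (4 * Real.pi * σ) - C3 / (6 * h)

/-- The 3D mesoscopic association rate `ρ³(k_r,h) = (k_r/h³)·(1+(k_r/D)·G³(h))⁻¹`. -/
noncomputable def rho3 (σ D kr h : ℝ) : ℝ :=
  (kr / h ^ 3) * (1 + (kr / D) * G3 σ h)⁻¹

theorem stmt_13 (σ D kr : ℝ) (hσ : 0 < σ) (hD : 0 < D) (hkr : 0 < kr)
    (ε : ℝ) (hε : 0 < ε) (hε1 : ε < 1) :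
    (∀ h : ℝ, (2 * Real.pi * C3 / 3) * σ < h →
      0 < G3 σ h ∧ 0 < kr - h ^ 3 * rho3 σ D kr h) ∧
    ((D / kr) * ε / (1 - ε) < 1 / (4 * Real.pi * σ) →
      ∀ h : ℝ, (2 * Real.pi * C3 / 3) * σ < h →
        (kr - h ^ 3 * rho3 σ D kr h < ε * kr ↔
          h < (C3 / 6) * (1 / (4 * Real.pi * σ) - (D / kr) * ε / (1 - ε))⁻¹)) ∧
    (1 / (4 * Real.pi * σ) ≤ (D / kr) * ε / (1 - ε) →
      ∀ h : ℝ, (2 * Real.pi * C3 / 3) * σ < h →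
        kr - h ^ 3 * rho3 σ D kr h < ε * kr) := by
  have hπ := Real.pi_pos
  have hC3 : (0:ℝ) < C3 := by norm_num [C3]
  have hεs : 0 < 1 - ε := by linarith
  -- core facts for admissible h
  have core : ∀ h : ℝ, (2 * Real.pi * C3 / 3) * σ < h →
      0 < h ∧ 0 < G3 σ h ∧
      kr - h ^ 3 * rho3 σ D kr h =
        kr * ((kr / D) * G3 σ h) / (1 + (kr / D) * G3 σ h) := by
    intro h hh
    have hb : 0 < (2 * Real.pi * C3 / 3) * σ := by positivity
    have h0 : 0 < h := hb.trans hh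
    have hg : 0 < G3 σ h := by
      have h1 : C3 / (6 * h) < C3 / (4 * Real.pi * C3 * σ) := by
        apply div_lt_div_of_pos_left hC3 (by positivity)
        nlinarith
      have h2 : C3 / (4 * Real.pi * C3 * σ) = 1 / (4 * Real.pi * σ) := by
        rw [div_eq_div_iff (by positivity) (by positivity)]; ring
      simp only [G3]
      rw [h2] at h1
      linarith
    have ht : 0 < (kr / D) * G3 σ h := mul_pos (div_pos hkr hD) hg
    refine ⟨h0, hg, ?_⟩
    have hs : (1 + (kr / D) * G3 σ h) ≠ 0 := by positivity
    have h3 : h ^ 3 ≠ 0 := by positivity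
    simp only [rho3]
    field_simp
    ring
  -- the key reformulation of the threshold condition
  have key : ∀ h : ℝ, (2 * Real.pi * C3 / 3) * σ < h →
      (kr - h ^ 3 * rho3 σ D kr h < ε * kr ↔
        G3 σ h < (D / kr) * ε / (1 - ε)) := by
    intro h hh
    obtain ⟨h0, hg, heq⟩ := core h hh
    have ht : 0 < (kr / D) * G3 σ h := mul_pos (div_pos hkr hD) hg
    have hs : 0 < 1 + (kr / D) * G3 σ h := by linarith
    have hB2 : (D / kr) * ε / (1 - ε) = (ε / (1 - ε)) / (kr / D) := by
      rw [div_eq_div_iff hεs.ne' (by positivity : (0:ℝ) < kr / D).ne']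
      field_simp
    rw [heq, div_lt_iff₀ hs, hB2, lt_div_iff₀ (div_pos hkr hD), lt_div_iff₀ hεs]
    constructor
    · intro H
      nlinarith [mul_pos hkr hg, mul_pos hD hg]
    · intro H
      nlinarith [mul_pos hkr hg, mul_pos hD hg, mul_pos (mul_pos hkr hkr) hg,
        sq_nonneg (kr / D)]
  refine ⟨fun h hh => ⟨(core h hh).2.1, ?_⟩, ?_, ?_⟩
  · obtain ⟨h0, hg, heq⟩ := core h hh
    rw [heq]
    positivity
  · intro hA h hh
    obtain ⟨h0, hg, heq⟩ := core h hh
    rw [key h hh]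
    have hc : 0 < 1 / (4 * Real.pi * σ) - (D / kr) * ε / (1 - ε) := by linarith
    have hform : (C3 / 6) * (1 / (4 * Real.pi * σ) - (D / kr) * ε / (1 - ε))⁻¹ =
        C3 / (6 * (1 / (4 * Real.pi * σ) - (D / kr) * ε / (1 - ε))) := by
      have hc' := hc.ne'
      field_simp
    rw [hform]
    simp only [G3]
    constructor
    · intro H
      rw [lt_div_iff₀ (by positivity)]
      have h1 : 1 / (4 * Real.pi * σ) - (D / kr) * ε / (1 - ε) < C3 / (6 * h) := by
        linarith
      have h2 : (1 / (4 * Real.pi * σ) - (D / kr) * ε / (1 - ε)) * (6 * h) < C3 :=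
        (lt_div_iff₀ (by positivity)).1 h1
      nlinarith
    · intro H
      have h2 : h * (6 * (1 / (4 * Real.pi * σ) - (D / kr) * ε / (1 - ε))) < C3 :=
        (lt_div_iff₀ (by positivity)).1 H
      have h1 : 1 / (4 * Real.pi * σ) - (D / kr) * ε / (1 - ε) < C3 / (6 * h) := by
        rw [lt_div_iff₀ (by positivity)]
        nlinarith
      linarith
  · intro hA h hh
    obtain ⟨h0, hg, heq⟩ := core h hh
    rw [key h hh]
    have hpos : 0 < C3 / (6 * h) := by positivity
    simp only [G3]
    linarith
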